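/- Let f : ℝ → ℝ be bounded and regulated, and satisfy the no-jamming condition. Then every Carathéodory solution of ẋ = f(x) defined on a bounded interval [0,T] can be extended to a Carathéodory solution defined on all of [0,∞): if x : [0,T] → ℝ satisfies x(t) = x(0) + ∫₀ᵗ f(x(s)) ds for all t ∈ [0,T], then there exists x̃ : [0,∞) → ℝ with x̃ = x on [0,T] and x̃(t) = x(0) + ∫₀ᵗ f(x̃(s)) ds for all t ≥ 0. -/

import Mathlib

open MeasureTheory Set Filter

/-- `f` is regulated with left limits `fl` and right limits `fr`. -/
def Regulated (f fl fr : ℝ → ℝ) : Prop :=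
  ∀ y : ℝ,
    Filter.Tendsto f (nhdsWithin y (Set.Iio y)) (nhds (fl y)) ∧
    Filter.Tendsto f (nhdsWithin y (Set.Ioi y)) (nhds (fr y))

/-- The no-jamming condition: if `f(y−)·f(y+) = 0` or `f(y−) > 0 > f(y+)`, then `f(y) = 0`. -/
def NoJamming (f fl fr : ℝ → ℝ) : Prop :=
  ∀ y : ℝ, (fl y * fr y = 0 ∨ (0 < fl y ∧ fr y < 0)) → f y = 0

open scoped Topology ENNReal

/-!
It suffices to solve `ẋ = f(x)` on `[0, ∞)` from `x(T)` and to glue that solution on at time `T`.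

If `f(y₀) = 0` the constant is a solution. Otherwise no-jamming gives `f(y₀+) > 0` or
`f(y₀−) < 0`, and the reflection `y ↦ -y` turns the second case into the first. When
`f(y₀+) > 0` the solution moves right and is the generalized inverse of the travel time
`τ(z) = ∫_{y₀}^z dy / f(y)`, read as `∞` once `f ≤ 0` on a set of positive measure. The change
of variables behind `∫₀ᵗ f(u) = u(t) - y₀` is that this inverse pushes Lebesgue measure on
`[0, τ(b)]` forward to `dy / f(y)` on `(y₀, b]`. If the solution stops at `b` before time `t`,
the travel time past `b` is infinite, forcing `f(b+) ≤ 0`, while `f > 0` a.e. on `(y₀, b)` gives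
`f(b−) ≥ 0`; no-jamming then gives `f(b) = 0`.
-/

lemma Set.Countable.of_forall_eventually_notMem_nhdsGT {s : Set ℝ}
    (hs : ∀ y ∈ s, ∀ᶠ w in 𝓝[>] y, w ∉ s) : s.Countable := by
  refine countable_setOfPred_isolated_right_within.mono fun y hy =>
    show y ∈ {x ∈ s | 𝓝[s ∩ Ioi x] x = ⊥} from ⟨hy, ?_⟩
  rw [inter_comm, nhdsWithin_inter', inf_principal_eq_bot]
  exact hs y hy

namespace Regulated

variable {f fl fr : ℝ → ℝ}

lemma comp_neg (h : Regulated f fl fr) :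
    Regulated (fun y => f (-y)) (fun y => fr (-y)) (fun y => fl (-y)) := by
  intro y
  constructor
  · refine (h (-y)).2.comp ?_
    simpa using (tendsto_neg_nhdsLT (a := y))
  · refine (h (-y)).1.comp ?_
    simpa using (tendsto_neg_nhdsGT (a := y))

lemma neg (h : Regulated f fl fr) : Regulated (-f) (-fl) (-fr) :=
  fun y => ⟨(h y).1.neg, (h y).2.neg⟩

lemma tendsto_right_nhdsGT (h : Regulated f fl fr) (y : ℝ) :
    Tendsto fr (𝓝[>] y) (𝓝 (fr y)) := by
  refine (closed_nhds_basis (fr y)).tendsto_right_iff.2 fun C ⟨hC, hCc⟩ => ?_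
  have hfC : ∀ᶠ w in 𝓝[>] y, f w ∈ C := (h y).2 hC
  filter_upwards [eventually_eventually_nhdsWithin.2 hfC, self_mem_nhdsWithin] with z hz hyz
  exact hCc.mem_of_tendsto (h z).2 (nhdsWithin_mono z (Ioi_subset_Ioi (le_of_lt hyz)) hz)

lemma countable_setOf_ne_right (h : Regulated f fl fr) : {y | f y ≠ fr y}.Countable := by
  have hB : ∀ n : ℕ, {y | (n + 1 : ℝ)⁻¹ < |f y - fr y|}.Countable := by
    intro n
    obtain ⟨ε, hε, hεn⟩ : ∃ ε : ℝ, 0 < ε ∧ ε + ε = (n + 1 : ℝ)⁻¹ :=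
      ⟨(n + 1 : ℝ)⁻¹ / 2, by positivity, add_halves _⟩
    refine Set.Countable.of_forall_eventually_notMem_nhdsGT fun y _ => ?_
    have hf : ∀ᶠ w in 𝓝[>] y, dist (f w) (fr y) < ε := (h y).2 (Metric.ball_mem_nhds _ hε)
    have hfr : ∀ᶠ w in 𝓝[>] y, dist (fr w) (fr y) < ε :=
      h.tendsto_right_nhdsGT y (Metric.ball_mem_nhds _ hε)
    filter_upwards [hf, hfr] with w hw hw'
    rw [not_lt, ← Real.dist_eq]
    linarith [dist_triangle_right (f w) (fr w) (fr y)]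
  refine (countable_iUnion hB).mono fun y hy => mem_iUnion.2 ?_
  obtain ⟨n, hn⟩ := exists_nat_gt (|f y - fr y|)⁻¹
  refine ⟨n, (inv_lt_of_inv_lt₀ (abs_pos.2 (sub_ne_zero.2 hy)) ?_)⟩
  linarith

lemma countable_setOf_ne_left (h : Regulated f fl fr) : {y | f y ≠ fl y}.Countable := by
  refine (h.comp_neg.countable_setOf_ne_right.preimage neg_injective).mono fun y hy => ?_
  simpa using hy

lemma measurable (h : Regulated f fl fr) : Measurable f := by
  set D := {y | f y ≠ fr y} ∪ {y | f y ≠ fl y}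
  have hD : D.Countable := h.countable_setOf_ne_right.union h.countable_setOf_ne_left
  have hcont : ContinuousOn f Dᶜ := fun y hy => by
    simp only [D, mem_compl_iff, mem_union, mem_ofPred_eq, not_or, not_not] at hy
    refine (continuousAt_iff_continuous_left_right.2 ⟨?_, ?_⟩).continuousWithinAt
    · exact continuousWithinAt_Iio_iff_Iic.1 (by rw [ContinuousWithinAt, hy.2]; exact (h y).1)
    · exact continuousWithinAt_Ioi_iff_Ici.1 (by rw [ContinuousWithinAt, hy.1]; exact (h y).2)
  have := hD.to_subtype
  exact measurable_of_restrict_of_restrict_compl hD.measurableSet (measurable_of_countable _)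
    (continuousOn_iff_continuous_domRestrict.1 hcont).measurable

lemma nonneg_left_of_ae_pos (h : Regulated f fl fr) {a b : ℝ} (hab : a < b)
    (hpos : ∀ᵐ w ∂volume.restrict (Ioc a b), 0 < f w) : 0 ≤ fl b := by
  by_contra! hneg
  obtain ⟨c, hcb, hc⟩ := mem_nhdsLT_iff_exists_Ioo_subset.1 ((h b).1 (Iio_mem_nhds hneg))
  have hsub : Ioo (max a c) b ⊆ Ioc a b :=
    Ioo_subset_Ioc_self.trans (Ioc_subset_Ioc_left le_sup_left)
  have hvol : volume (Ioo (max a c) b) ≠ 0 := by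
    rw [Real.volume_Ioo, ne_eq, ENNReal.ofReal_eq_zero, not_le, sub_pos]
    exact max_lt hab hcb
  obtain ⟨w, hw, hfw⟩ := Measure.exists_mem_of_measure_ne_zero_of_ae hvol
    (ae_restrict_of_ae_restrict_of_subset hsub hpos)
  exact lt_asymm hfw (hc ⟨(le_max_right _ _).trans_lt hw.1, hw.2⟩)

end Regulated

namespace NoJamming

variable {f fl fr : ℝ → ℝ}

lemma comp_neg_neg (h : NoJamming f fl fr) :
    NoJamming (fun y => -f (-y)) (fun y => -fr (-y)) (fun y => -fl (-y)) := by
  refine fun y hy => neg_eq_zero.2 (h (-y) ?_)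
  rw [neg_mul_neg, mul_comm, neg_pos, neg_lt_zero] at hy
  exact hy.imp id And.symm

lemma apply_eq_zero (h : NoJamming f fl fr) {y : ℝ} (hl : 0 ≤ fl y) (hr : fr y ≤ 0) :
    f y = 0 := by
  rcases hl.eq_or_lt with hl | hl
  · exact h y (.inl (by rw [← hl, zero_mul]))
  rcases hr.eq_or_lt with hr | hr
  · exact h y (.inl (by rw [hr, mul_zero]))
  · exact h y (.inr ⟨hl, hr⟩)

lemma pos_right_or_neg_left (h : NoJamming f fl fr) {y : ℝ} (hy : f y ≠ 0) :
    0 < fr y ∨ fl y < 0 := by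
  by_contra! H
  exact hy (h.apply_eq_zero H.2 H.1)

end NoJamming

section Integrability

variable {g : ℝ → ℝ} {M a b : ℝ}

lemma intervalIntegrable_of_abs_le (hg : ∀ s, |g s| ≤ M)
    (hm : AEStronglyMeasurable g (volume.restrict (uIoc a b))) : IntervalIntegrable g volume a b :=
  intervalIntegrable_const.mono_fun' hm (ae_of_all _ hg)

lemma intervalIntegrable_of_forall_lt (hg : ∀ s, |g s| ≤ M) (hab : a ≤ b)
    (h : ∀ t ∈ Ico a b, IntervalIntegrable g volume a t) : IntervalIntegrable g volume a b := by
  rcases hab.eq_or_lt with rfl | hab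
  · exact .refl
  obtain ⟨u, -, hu, hlim⟩ := exists_seq_strictMono_tendsto' hab
  have hIoo : Ioo a b = ⋃ n, Ioc a (u n) := by
    ext w
    refine ⟨fun hw => ?_, fun hw => ?_⟩
    · obtain ⟨n, hn⟩ := ((tendsto_order.1 hlim).1 w hw.2).exists
      exact mem_iUnion.2 ⟨n, hw.1, hn.le⟩
    · obtain ⟨n, hn⟩ := mem_iUnion.1 hw
      exact ⟨hn.1, hn.2.trans_lt (hu n).2⟩
  refine intervalIntegrable_of_abs_le hg ?_
  rw [uIoc_of_le hab.le, ← Measure.restrict_congr_set Ioo_ae_eq_Ioc, hIoo,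
    aestronglyMeasurable_iUnion_iff]
  exact fun n => ((intervalIntegrable_iff_integrableOn_Ioc_of_le (hu n).1.le).1
    (h (u n) ⟨(hu n).1.le, (hu n).2⟩)).aestronglyMeasurable

lemma intervalIntegrable_of_forall_not_imp_eq (hg : ∀ s, |g s| ≤ M) (hab : a ≤ b) (c : ℝ)
    (hc : ∀ t ∈ Ioc a b, ¬ IntervalIntegrable g volume a t → g t = c) :
    IntervalIntegrable g volume a b := by
  set G := {t ∈ Icc a b | IntervalIntegrable g volume a t}
  have hG : BddAbove G := ⟨b, fun t ht => ht.1.2⟩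
  have haG : a ∈ G := ⟨left_mem_Icc.2 hab, .refl⟩
  have ht₀ : sSup G ∈ Icc a b := ⟨le_csSup hG haG, csSup_le ⟨a, haG⟩ fun t ht => ht.1.2⟩
  have hleft : IntervalIntegrable g volume a (sSup G) :=
    intervalIntegrable_of_forall_lt hg ht₀.1 fun t ht => by
      obtain ⟨t', ht', htt'⟩ := exists_lt_of_lt_csSup ⟨a, haG⟩ ht.2
      exact ht'.2.mono_set (uIcc_subset_uIcc_left (mem_uIcc_of_le ht.1 htt'.le))
  have hright : IntervalIntegrable g volume (sSup G) b := by
    refine (intervalIntegrable_const (c := c)).congr fun t ht => ?_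
    rw [uIoc_of_le ht₀.2] at ht
    refine (hc t ⟨ht₀.1.trans_lt ht.1, ht.2⟩ fun hint => ?_).symm
    exact not_le.2 ht.1 (le_csSup hG ⟨⟨(ht₀.1.trans_lt ht.1).le, ht.2⟩, hint⟩)
  exact hleft.trans hright

end Integrability

namespace MeasureTheory.Measure

noncomputable def cdfInv (ρ : Measure ℝ) (y₀ t : ℝ) : ℝ :=
  sSup {z | y₀ ≤ z ∧ ρ (Ioc y₀ z) ≤ ENNReal.ofReal t}

variable {ρ : Measure ℝ} {y₀ s t c d : ℝ}

lemma tendsto_measure_Ioc_nhdsGT (a : ℝ) (hcd : c < d) (hd : ρ (Ioc a d) ≠ ∞) :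
    Tendsto (fun z => ρ (Ioc a z)) (𝓝[>] c) (𝓝 (ρ (Ioc a c))) := by
  have hInter : ⋂ r > c, Ioc a r = Ioc a c := by
    ext w
    simp only [mem_iInter, mem_Ioc]
    exact ⟨fun h => ⟨(h d hcd).1, le_of_forall_gt_imp_ge_of_dense fun r hr => (h r hr).2⟩,
      fun h r hr => ⟨h.1, h.2.trans hr.le⟩⟩
  rw [← hInter]
  exact tendsto_measure_biInter_gt (fun _ _ => measurableSet_Ioc.nullMeasurableSet)
    (fun _ _ _ hij => Ioc_subset_Ioc_right hij) ⟨d, hcd, hd⟩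

lemma bddAbove_setOf_measure_Ioc_le (hρ : ρ (Ioi y₀) = ∞) (t : ℝ) :
    BddAbove {z | y₀ ≤ z ∧ ρ (Ioc y₀ z) ≤ ENNReal.ofReal t} := by
  have hlim : Tendsto (fun z => ρ (Ioc y₀ z)) atTop (𝓝 ∞) := by
    rw [← hρ, ← iUnion_Ioc_right]
    exact tendsto_measure_iUnion_atTop fun _ _ h => Ioc_subset_Ioc_right h
  obtain ⟨z₁, hz₁⟩ := (hlim.eventually (lt_mem_nhds ENNReal.ofReal_lt_top)).exists
  exact ⟨z₁, fun z hz => le_of_not_gt fun h =>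
    ((measure_mono (Ioc_subset_Ioc_right h.le)).trans hz.2).not_gt hz₁⟩

lemma le_cdfInv_of_measure_Ioc_le (hρ : ρ (Ioi y₀) = ∞) {z : ℝ} (hz : y₀ ≤ z)
    (h : ρ (Ioc y₀ z) ≤ ENNReal.ofReal t) : z ≤ ρ.cdfInv y₀ t :=
  le_csSup (bddAbove_setOf_measure_Ioc_le hρ t) ⟨hz, h⟩

lemma le_cdfInv (hρ : ρ (Ioi y₀) = ∞) (t : ℝ) : y₀ ≤ ρ.cdfInv y₀ t :=
  le_cdfInv_of_measure_Ioc_le hρ le_rfl (by simp)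

lemma monotone_cdfInv (hρ : ρ (Ioi y₀) = ∞) : Monotone (ρ.cdfInv y₀) := fun _ t hst =>
  csSup_le_csSup (bddAbove_setOf_measure_Ioc_le hρ t) ⟨y₀, le_rfl, by simp⟩
    fun _ hz => ⟨hz.1, hz.2.trans (ENNReal.ofReal_le_ofReal hst)⟩

lemma cdfInv_le_of_lt_measure_Ioc (h : ENNReal.ofReal s < ρ (Ioc y₀ c)) : ρ.cdfInv y₀ s ≤ c :=
  csSup_le ⟨y₀, le_rfl, by simp⟩ fun _ hz => le_of_not_gt fun hcz =>
    (hz.2.trans_lt h).not_ge (measure_mono (Ioc_subset_Ioc_right hcz.le))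

lemma lt_cdfInv_of_measure_Ioc_lt (hρ : ρ (Ioi y₀) = ∞) (hc : y₀ ≤ c) (hcd : c < d)
    (hd : ρ (Ioc y₀ d) ≠ ∞) (h : ρ (Ioc y₀ c) < ENNReal.ofReal s) : c < ρ.cdfInv y₀ s := by
  obtain ⟨w, hw, hcw⟩ := (((tendsto_measure_Ioc_nhdsGT y₀ hcd hd).eventually
    (gt_mem_nhds h)).and self_mem_nhdsWithin).exists
  exact hcw.trans_le (le_cdfInv_of_measure_Ioc_le hρ (hc.trans hcw.le) hw.le)

lemma measure_Ioc_cdfInv_le [NullSingletonClass ρ] (hρ : ρ (Ioi y₀) = ∞) (t : ℝ) :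
    ρ (Ioc y₀ (ρ.cdfInv y₀ t)) ≤ ENNReal.ofReal t := by
  have hS : {z | y₀ ≤ z ∧ ρ (Ioc y₀ z) ≤ ENNReal.ofReal t}.Nonempty := ⟨y₀, le_rfl, by simp⟩
  obtain ⟨z, hz, hlim, hzS⟩ := exists_seq_tendsto_sSup hS (bddAbove_setOf_measure_Ioc_le hρ t)
  have hzI : Monotone fun n => Ioc y₀ (z n) := fun _ _ h => Ioc_subset_Ioc_right (hz h)
  calc ρ (Ioc y₀ (ρ.cdfInv y₀ t)) = ρ (Ioo y₀ (ρ.cdfInv y₀ t)) :=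
        measure_congr Ioo_ae_eq_Ioc.symm
    _ ≤ ρ (⋃ n, Ioc y₀ (z n)) := measure_mono fun w hw => by
        obtain ⟨n, hn⟩ := ((tendsto_order.1 hlim).1 w hw.2).exists
        exact mem_iUnion.2 ⟨n, hw.1, hn.le⟩
    _ = ⨆ n, ρ (Ioc y₀ (z n)) := hzI.measure_iUnion
    _ ≤ ENNReal.ofReal t := iSup_le fun n => (hzS n).2

lemma measure_Ioc_cdfInv_eq_top (hρ : ρ (Ioi y₀) = ∞)
    (h : ρ (Ioc y₀ (ρ.cdfInv y₀ t)) < ENNReal.ofReal t) (hd : ρ.cdfInv y₀ t < d) :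
    ρ (Ioc (ρ.cdfInv y₀ t) d) = ∞ := by
  by_contra hfin
  have hd' : ρ (Ioc y₀ d) ≠ ∞ := by
    rw [← Ioc_union_Ioc_eq_Ioc (le_cdfInv hρ t) hd.le]
    exact ne_top_of_le_ne_top (ENNReal.add_ne_top.2 ⟨ne_top_of_lt h, hfin⟩)
      (measure_union_le _ _)
  exact (lt_cdfInv_of_measure_Ioc_lt hρ (le_cdfInv hρ t) hd hd' h).false

theorem map_cdfInv_restrict [NullSingletonClass ρ] (hρ : ρ (Ioi y₀) = ∞) (ht : 0 ≤ t) :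
    (volume.restrict (Ioc 0 (ρ (Ioc y₀ (ρ.cdfInv y₀ t))).toReal)).map (ρ.cdfInv y₀) =
      ρ.restrict (Ioc y₀ (ρ.cdfInv y₀ t)) := by
  set u := ρ.cdfInv y₀
  have hu := monotone_cdfInv hρ
  have hb : ρ (Ioc y₀ (u t)) ≤ ENNReal.ofReal t := measure_Ioc_cdfInv_le hρ t
  have hbfin : ρ (Ioc y₀ (u t)) ≠ ∞ := ne_top_of_le_ne_top ENNReal.ofReal_ne_top hb
  set t₁ := (ρ (Ioc y₀ (u t))).toReal
  have ht₁ : t₁ ≤ t := ENNReal.toReal_le_of_le_ofReal ht hb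
  have : IsFiniteMeasure (volume.restrict (Ioc 0 t₁)) := isFiniteMeasure_restrict.2 (by simp)
  refine ext_of_Iic _ _ fun c => ?_
  rw [map_apply hu.measurable measurableSet_Iic,
    restrict_apply (hu.measurable measurableSet_Iic), restrict_apply measurableSet_Iic]
  rcases le_or_gt (u t) c with hbc | hcb
  · rw [inter_eq_right.2 (show Ioc 0 t₁ ⊆ u ⁻¹' Iic c from
        fun s hs => (hu (hs.2.trans ht₁)).trans hbc),
      inter_eq_right.2 (show Ioc y₀ (u t) ⊆ Iic c from fun w hw => hw.2.trans hbc),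
      Real.volume_Ioc, sub_zero, ENNReal.ofReal_toReal hbfin]
  have hcfin : ρ (Ioc y₀ c) ≠ ∞ :=
    ne_top_of_le_ne_top hbfin (measure_mono (Ioc_subset_Ioc_right hcb.le))
  have ha : (ρ (Ioc y₀ c)).toReal ≤ t₁ :=
    ENNReal.toReal_mono hbfin (measure_mono (Ioc_subset_Ioc_right hcb.le))
  have hlow : Ioo 0 (ρ (Ioc y₀ c)).toReal ⊆ u ⁻¹' Iic c ∩ Ioc 0 t₁ := fun s hs =>
    ⟨cdfInv_le_of_lt_measure_Ioc ((ENNReal.ofReal_lt_iff_lt_toReal hs.1.le hcfin).2 hs.2),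
      hs.1, hs.2.le.trans ha⟩
  have hup : u ⁻¹' Iic c ∩ Ioc 0 t₁ ⊆ Ioc 0 (ρ (Ioc y₀ c)).toReal := fun s hs => by
    refine ⟨hs.2.1, (ENNReal.ofReal_le_iff_le_toReal hcfin).1 (le_of_not_gt fun hlt => ?_)⟩
    exact (lt_cdfInv_of_measure_Ioc_lt hρ ((le_cdfInv hρ s).trans hs.1) hcb hbfin hlt).not_ge
      hs.1
  rw [Iic_inter_Ioc_of_le hcb.le]
  refine le_antisymm ((measure_mono hup).trans_eq ?_) (le_of_eq_of_le ?_ (measure_mono hlow))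
  · rw [Real.volume_Ioc, sub_zero, ENNReal.ofReal_toReal hcfin]
  · rw [Real.volume_Ioo, sub_zero, ENNReal.ofReal_toReal hcfin]

end MeasureTheory.Measure

noncomputable def slowness (f : ℝ → ℝ) (w : ℝ) : ℝ≥0∞ :=
  if 0 < f w then ENNReal.ofReal (f w)⁻¹ else ∞

/-- `travelTime f (Ioc a b)` is the time the flow of `ẋ = f(x)` needs from `a` to `b`; the density
is infinite where `f ≤ 0`, since the flow cannot cross such points to the right. -/
noncomputable def travelTime (f : ℝ → ℝ) : Measure ℝ :=
  volume.withDensity (slowness f)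

instance (f : ℝ → ℝ) : NullSingletonClass (travelTime f) :=
  inferInstanceAs (NullSingletonClass (volume.withDensity _))

section TravelTime

variable {f : ℝ → ℝ}

lemma measurable_slowness (hf : Measurable f) : Measurable (slowness f) :=
  Measurable.ite (hf measurableSet_Ioi) (ENNReal.measurable_ofReal.comp hf.inv) measurable_const

lemma travelTime_apply {s : Set ℝ} (hs : MeasurableSet s) :
    travelTime f s = ∫⁻ w in s, slowness f w :=
  withDensity_apply _ hs

lemma travelTime_Ioi_eq_top {M : ℝ} (hM : ∀ y, f y ≤ M) (hM0 : 0 < M) (a : ℝ) :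
    travelTime f (Ioi a) = ∞ := by
  have hle : ∀ w, ENNReal.ofReal M⁻¹ ≤ slowness f w := fun w => by
    unfold slowness
    split_ifs with h
    · exact ENNReal.ofReal_le_ofReal (inv_anti₀ h (hM w))
    · exact le_top
  refine top_unique ?_
  calc ∞ = ∫⁻ _ in Ioi a, ENNReal.ofReal M⁻¹ := by
        rw [setLIntegral_const, Real.volume_Ioi, ENNReal.mul_top (by simpa using hM0)]
    _ ≤ travelTime f (Ioi a) := by
        rw [travelTime_apply measurableSet_Ioi]
        exact lintegral_mono hle

lemma ae_pos_of_travelTime_ne_top (hf : Measurable f) {s : Set ℝ} (hs : MeasurableSet s)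
    (h : travelTime f s ≠ ∞) : ∀ᵐ w ∂volume.restrict s, 0 < f w := by
  rw [travelTime_apply hs] at h
  filter_upwards [ae_lt_top (measurable_slowness hf) h] with w hw
  by_contra hneg
  simp [slowness, hneg] at hw

lemma exists_travelTime_Ioc_ne_top {fl fr : ℝ → ℝ} (hreg : Regulated f fl fr) {c : ℝ}
    (hc : 0 < fr c) : ∃ d > c, travelTime f (Ioc c d) ≠ ∞ := by
  obtain ⟨d, hcd, hd⟩ :=
    mem_nhdsGT_iff_exists_Ioo_subset.1 ((hreg c).2 (Ioi_mem_nhds (half_lt_self hc)))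
  obtain ⟨d', hcd', hd'd⟩ := exists_between (mem_Ioi.1 hcd)
  have hle : ∀ w ∈ Ioc c d', slowness f w ≤ ENNReal.ofReal (fr c / 2)⁻¹ := fun w hw => by
    have hfw : fr c / 2 < f w := hd ⟨hw.1, hw.2.trans_lt hd'd⟩
    rw [slowness, if_pos ((half_pos hc).trans hfw)]
    exact ENNReal.ofReal_le_ofReal (inv_anti₀ (half_pos hc) hfw.le)
  refine ⟨d', hcd', (?_ : travelTime f (Ioc c d') < ∞).ne⟩
  calc travelTime f (Ioc c d') ≤ ∫⁻ _ in Ioc c d', ENNReal.ofReal (fr c / 2)⁻¹ := by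
        rw [travelTime_apply measurableSet_Ioc]
        exact setLIntegral_mono measurable_const hle
    _ < ∞ := by simp [ENNReal.mul_lt_top]

lemma setIntegral_travelTime (hf : Measurable f) {a b : ℝ} (hab : a ≤ b)
    (h : travelTime f (Ioc a b) ≠ ∞) : ∫ w in Ioc a b, f w ∂travelTime f = b - a := by
  have hpos := ae_pos_of_travelTime_ne_top hf measurableSet_Ioc h
  rw [travelTime, setIntegral_withDensity_eq_setIntegral_toReal_smul (measurable_slowness hf)
    (hpos.mono fun w hw => by simp [slowness, hw]) _ measurableSet_Ioc]
  calc ∫ w in Ioc a b, (slowness f w).toReal • f w = ∫ _ in Ioc a b, (1 : ℝ) :=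
        integral_congr_ae (hpos.mono fun w hw => by
          change (slowness f w).toReal • f w = 1
          rw [slowness, if_pos hw, ENNReal.toReal_ofReal (inv_nonneg.2 hw.le), smul_eq_mul,
            inv_mul_cancel₀ hw.ne'])
    _ = b - a := by simp [hab]

end TravelTime

def IsCaratheodorySolution (f x : ℝ → ℝ) (I : Set ℝ) : Prop :=
  ∀ t ∈ I, x t = x 0 + ∫ s in (0 : ℝ)..t, f (x s)

namespace IsCaratheodorySolution

variable {f x u : ℝ → ℝ} {I : Set ℝ} {M T : ℝ}

lemma mono {J : Set ℝ} (h : IsCaratheodorySolution f x I) (hJI : J ⊆ I) :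
    IsCaratheodorySolution f x J :=
  fun t ht => h t (hJI ht)

lemma const {y : ℝ} (hy : f y = 0) : IsCaratheodorySolution f (fun _ => y) I :=
  fun _ _ => by simp [hy]

lemma of_comp_neg_neg (h : IsCaratheodorySolution (fun y => -f (-y)) x I) :
    IsCaratheodorySolution f (-x) I := fun t ht => by
  simp only [Pi.neg_apply, h t ht, intervalIntegral.integral_neg, neg_neg, neg_add]

/-- Where `f ∘ x` is not integrable on `[0, t]`, the junk value `0` of the integral forces
`x t = x 0`, so `f ∘ x` is constant on the bad set. -/
lemma intervalIntegrable (hb : ∀ y, |f y| ≤ M) (h : IsCaratheodorySolution f x (Icc 0 T))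
    (hT : 0 ≤ T) : IntervalIntegrable (fun s => f (x s)) volume 0 T :=
  intervalIntegrable_of_forall_not_imp_eq (fun s => hb (x s)) hT (f (x 0)) fun t ht hint => by
    rw [h t ⟨ht.1.le, ht.2⟩, intervalIntegral.integral_undef hint, add_zero]

lemma piecewise (hb : ∀ y, |f y| ≤ M) (hT : 0 ≤ T) (hx : IsCaratheodorySolution f x (Icc 0 T))
    (hu : IsCaratheodorySolution f u (Ici 0)) (hu0 : u 0 = x T) :
    IsCaratheodorySolution f (fun t => if t ≤ T then x t else u (t - T)) (Ici 0) := by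
  set y := fun t => if t ≤ T then x t else u (t - T)
  have hleft : ∀ t ≤ T, y t = x t := fun t ht => if_pos ht
  have hright : ∀ t, T ≤ t → y t = u (t - T) := fun t ht => by
    rcases ht.eq_or_lt with rfl | ht
    · rw [hleft _ le_rfl, sub_self, hu0]
    · exact if_neg (not_le.2 ht)
  have hint_left : ∀ t ∈ Icc 0 T, ∫ s in (0 : ℝ)..t, f (y s) = ∫ s in (0 : ℝ)..t, f (x s) :=
    fun t ht => intervalIntegral.integral_congr fun s hs => by
      rw [uIcc_of_le ht.1] at hs
      simp only [hleft s (hs.2.trans ht.2)]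
  intro t ht
  rcases le_or_gt t T with htT | hTt
  · rw [hleft 0 hT, hleft t htT, hint_left t ⟨ht, htT⟩, hx t ⟨ht, htT⟩]
  have htT : 0 ≤ t - T := sub_nonneg.2 hTt.le
  have hIu := ((hu.mono Icc_subset_Ici_self).intervalIntegrable hb htT).comp_sub_right T
  rw [zero_add, sub_add_cancel] at hIu
  have heq_right : EqOn (fun s => f (u (s - T))) (fun s => f (y s)) (uIcc T t) := fun s hs => by
    rw [uIcc_of_le hTt.le] at hs
    simp only [hright s hs.1]
  rw [← intervalIntegral.integral_add_adjacent_intervals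
      ((hx.intervalIntegrable hb hT).congr fun s hs => by
        simp only [hleft s (uIoc_of_le hT ▸ hs).2])
      (hIu.congr (heq_right.mono Ioc_subset_Icc_self)),
    ← intervalIntegral.integral_congr heq_right,
    intervalIntegral.integral_comp_sub_right (fun r => f (u r)),
    sub_self, hleft 0 hT, hint_left T ⟨hT, le_rfl⟩, hright t hTt.le, hu (t - T) htT, hu0,
    hx T ⟨hT, le_rfl⟩, add_assoc]

end IsCaratheodorySolution

section Existence

variable {f fl fr : ℝ → ℝ} {M : ℝ}

lemma apply_cdfInv_travelTime_eq_zero (hreg : Regulated f fl fr) (hnj : NoJamming f fl fr)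
    {y₀ t : ℝ} (hy₀ : 0 < fr y₀) (hρ : travelTime f (Ioi y₀) = ∞)
    (ht : travelTime f (Ioc y₀ ((travelTime f).cdfInv y₀ t)) < ENNReal.ofReal t) :
    f ((travelTime f).cdfInv y₀ t) = 0 := by
  set b := (travelTime f).cdfInv y₀ t
  have hfr : fr b ≤ 0 := by
    by_contra! hpos
    obtain ⟨d, hbd, hd⟩ := exists_travelTime_Ioc_ne_top hreg hpos
    exact hd (Measure.measure_Ioc_cdfInv_eq_top hρ ht hbd)
  have hy₀b : y₀ < b :=
    (Measure.le_cdfInv hρ t).lt_of_ne (ne_of_apply_ne fr (hfr.trans_lt hy₀).ne')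
  have hfl : 0 ≤ fl b := hreg.nonneg_left_of_ae_pos hy₀b
    (ae_pos_of_travelTime_ne_top hreg.measurable measurableSet_Ioc (ne_top_of_lt ht))
  exact hnj.apply_eq_zero hfl hfr

lemma cdfInv_travelTime_eq_add_integral (hb : ∀ y, |f y| ≤ M) (hreg : Regulated f fl fr)
    (hnj : NoJamming f fl fr) {y₀ t : ℝ} (hy₀ : 0 < fr y₀) (hρ : travelTime f (Ioi y₀) = ∞)
    (ht : 0 ≤ t) :
    (travelTime f).cdfInv y₀ t = y₀ + ∫ s in (0 : ℝ)..t, f ((travelTime f).cdfInv y₀ s) := by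
  have hf := hreg.measurable
  set u := (travelTime f).cdfInv y₀
  have hu := Measure.monotone_cdfInv hρ
  have hintegrable : ∀ a b, IntervalIntegrable (fun s => f (u s)) volume a b := fun _ _ =>
    intervalIntegrable_of_abs_le (fun s => hb (u s)) (hf.comp hu.measurable).aestronglyMeasurable
  have hbt : travelTime f (Ioc y₀ (u t)) ≤ ENNReal.ofReal t := Measure.measure_Ioc_cdfInv_le hρ t
  have hbfin : travelTime f (Ioc y₀ (u t)) ≠ ∞ := ne_top_of_le_ne_top ENNReal.ofReal_ne_top hbt
  set t₁ := (travelTime f (Ioc y₀ (u t))).toReal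
  have ht₁ : t₁ ≤ t := ENNReal.toReal_le_of_le_ofReal ht hbt
  have hmove : ∫ s in (0 : ℝ)..t₁, f (u s) = u t - y₀ := by
    rw [intervalIntegral.integral_of_le ENNReal.toReal_nonneg,
      ← integral_map hu.measurable.aemeasurable hf.aestronglyMeasurable,
      Measure.map_cdfInv_restrict hρ ht, setIntegral_travelTime hf (Measure.le_cdfInv hρ t) hbfin]
  have hstay : ∀ s ∈ uIcc t₁ t, f (u s) = f (u t) := fun s hs => by
    rw [uIcc_of_le ht₁] at hs
    refine congrArg f (le_antisymm (hu hs.2) (Measure.le_cdfInv_of_measure_Ioc_le hρ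
      (Measure.le_cdfInv hρ t) ?_))
    rw [← ENNReal.ofReal_toReal hbfin]
    exact ENNReal.ofReal_le_ofReal hs.1
  have hrest : ∫ s in t₁..t, f (u s) = 0 := by
    rw [intervalIntegral.integral_congr hstay, intervalIntegral.integral_const, smul_eq_mul]
    rcases ht₁.eq_or_lt with h | h
    · rw [h, sub_self, zero_mul]
    · rw [apply_cdfInv_travelTime_eq_zero hreg hnj hy₀ hρ, mul_zero]
      rwa [← ENNReal.ofReal_toReal hbfin,
        ENNReal.ofReal_lt_ofReal_iff (ENNReal.toReal_nonneg.trans_lt h)]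
  rw [← intervalIntegral.integral_add_adjacent_intervals (hintegrable 0 t₁) (hintegrable t₁ t),
    hmove, hrest]
  ring

theorem exists_solution_of_pos_right (hb : ∀ y, |f y| ≤ M) (hreg : Regulated f fl fr)
    (hnj : NoJamming f fl fr) {y₀ : ℝ} (hy₀ : 0 < fr y₀) :
    ∃ u, u 0 = y₀ ∧ IsCaratheodorySolution f u (Ici 0) := by
  have hM : ∀ y, f y ≤ M := fun y => (abs_le.1 (hb y)).2
  have hρ : travelTime f (Ioi y₀) = ∞ :=
    travelTime_Ioi_eq_top hM (hy₀.trans_le (le_of_tendsto' (hreg y₀).2 hM)) y₀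
  have key := fun t (ht : (0 : ℝ) ≤ t) =>
    cdfInv_travelTime_eq_add_integral hb hreg hnj hy₀ hρ ht
  have hu0 : (travelTime f).cdfInv y₀ 0 = y₀ := by simpa using key 0 le_rfl
  refine ⟨_, hu0, fun t ht => ?_⟩
  rw [hu0]
  exact key t ht

theorem exists_solution (hb : ∀ y, |f y| ≤ M) (hreg : Regulated f fl fr)
    (hnj : NoJamming f fl fr) (y₀ : ℝ) : ∃ u, u 0 = y₀ ∧ IsCaratheodorySolution f u (Ici 0) := by
  by_cases hf0 : f y₀ = 0
  · exact ⟨fun _ => y₀, rfl, .const hf0⟩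
  rcases hnj.pos_right_or_neg_left hf0 with hr | hl
  · exact exists_solution_of_pos_right hb hreg hnj hr
  · obtain ⟨v, hv0, hv⟩ := exists_solution_of_pos_right (fun y => by simpa using hb (-y))
      hreg.comp_neg.neg hnj.comp_neg_neg (y₀ := -y₀) (by simpa using hl)
    exact ⟨-v, by simp [hv0], hv.of_comp_neg_neg⟩

end Existence

/-- Every Carathéodory solution of `ẋ = f(x)` on a bounded interval `[0,T]`
extends to a Carathéodory solution on all of `[0,∞)`. -/
theorem extension_of_caratheodory_solution
    (f : ℝ → ℝ) (M : ℝ) (hb : ∀ y : ℝ, |f y| ≤ M)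
    (fl fr : ℝ → ℝ) (hreg : Regulated f fl fr) (hnj : NoJamming f fl fr)
    (T : ℝ) (hT : 0 ≤ T) (x : ℝ → ℝ)
    (hsol : ∀ t ∈ Set.Icc (0:ℝ) T, x t = x 0 + ∫ s in (0:ℝ)..t, f (x s)) :
    ∃ xt : ℝ → ℝ, (∀ t ∈ Set.Icc (0:ℝ) T, xt t = x t) ∧
      ∀ t : ℝ, 0 ≤ t → xt t = x 0 + ∫ s in (0:ℝ)..t, f (xt s) := by
  obtain ⟨u, hu0, hu⟩ := exists_solution hb hreg hnj (x T)
  refine ⟨fun t => if t ≤ T then x t else u (t - T), fun t ht => if_pos ht.2, fun t ht => ?_⟩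
  convert IsCaratheodorySolution.piecewise hb hT hsol hu hu0 t ht using 2
  exact (if_pos hT).symm
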